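/- arXiv:1901.07884 — 6 statements merged into one kernel-verified Lean document; each statement's English description precedes it below -/
import Mathlib

section
/- Consider N examples with features g₁,...,g_N ∈ ℝ and binary labels for two tasks y_n^(k), y_n^(k+1) ∈ {0,1} satisfying y_n^(k) ≥ y_n^(k+1) for all n, with y_n^(k) = 1 and y_n^(k+1) = 0 for at least one n. Define for a bias b the per-task loss ℓ(b; labels) = −Σ_n [ labels_n · log σ(g_n + b) + (1 − labels_n) · log(1 − σ(g_n + b)) ]. If b_k < b_{k+1}, then either replacing b_k with b_{k+1} strictly decreases λ^(k)·ℓ(b_k; y^(k)), or replacing b_{k+1} with b_k strictly decreases λ^(k+1)·ℓ(b_{k+1}; y^(k+1)), where λ^(k), λ^(k+1) > 0 are arbitrary positive task weights. -/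
noncomputable def sigmoid (z : ℝ) : ℝ := 1 / (1 + Real.exp (-z))

noncomputable def binLoss (N : ℕ) (g : Fin N → ℝ) (labels : Fin N → ℝ) (b : ℝ) : ℝ :=
  -∑ n, (labels n * Real.log (sigmoid (g n + b)) +
    (1 - labels n) * Real.log (1 - sigmoid (g n + b)))

lemma sig_pos (z : ℝ) : 0 < sigmoid z := by
  unfold sigmoid
  positivity

lemma sig_lt_one (z : ℝ) : sigmoid z < 1 := by
  unfold sigmoid
  rw [div_lt_one (by positivity)]
  linarith [Real.exp_pos (-z)]

lemma sig_strictMono : StrictMono sigmoid := by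
  intro z w h
  unfold sigmoid
  apply one_div_lt_one_div_of_lt (by positivity)
  have := Real.exp_lt_exp.2 (neg_lt_neg h)
  linarith

theorem exchange_step (N : ℕ) (g : Fin N → ℝ) (u v : Fin N → ℝ)
    (hu : ∀ n, u n = 0 ∨ u n = 1) (hv : ∀ n, v n = 0 ∨ v n = 1)
    (huv : ∀ n, v n ≤ u n) (hsep : ∃ n, u n = 1 ∧ v n = 0)
    (lam lam' : ℝ) (hl : 0 < lam) (hl' : 0 < lam')
    (bk bk1 : ℝ) (hb : bk < bk1) :
    lam * binLoss N g u bk1 < lam * binLoss N g u bk ∨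
    lam' * binLoss N g v bk < lam' * binLoss N g v bk1 := by
  -- per-index term
  set T : (Fin N → ℝ) → ℝ → Fin N → ℝ := fun w b n =>
    w n * Real.log (sigmoid (g n + b)) +
      (1 - w n) * Real.log (1 - sigmoid (g n + b)) with hT
  have hterm : ∀ n : Fin N,
      T u bk n + T v bk1 n ≤ T u bk1 n + T v bk n := by
    intro n
    have hls : Real.log (sigmoid (g n + bk)) < Real.log (sigmoid (g n + bk1)) :=
      Real.log_lt_log (sig_pos _) (sig_strictMono (by linarith))
    have hls' : Real.log (1 - sigmoid (g n + bk1)) < Real.log (1 - sigmoid (g n + bk)) :=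
      Real.log_lt_log (by linarith [sig_lt_one (g n + bk1)])
        (by linarith [sig_strictMono (show g n + bk < g n + bk1 by linarith)])
    rcases hu n with h1 | h1 <;> rcases hv n with h2 | h2 <;>
      simp only [hT, h1, h2] <;> nlinarith [huv n]
  obtain ⟨m, hm1, hm2⟩ := hsep
  have hstrict : T u bk m + T v bk1 m < T u bk1 m + T v bk m := by
    have hls : Real.log (sigmoid (g m + bk)) < Real.log (sigmoid (g m + bk1)) :=
      Real.log_lt_log (sig_pos _) (sig_strictMono (by linarith))
    have hls' : Real.log (1 - sigmoid (g m + bk1)) < Real.log (1 - sigmoid (g m + bk)) :=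
      Real.log_lt_log (by linarith [sig_lt_one (g m + bk1)])
        (by linarith [sig_strictMono (show g m + bk < g m + bk1 by linarith)])
    simp only [hT, hm1, hm2]
    nlinarith
  have hsum : ∑ n, (T u bk n + T v bk1 n) < ∑ n, (T u bk1 n + T v bk n) :=
    Finset.sum_lt_sum (fun n _ => hterm n) ⟨m, Finset.mem_univ m, hstrict⟩
  simp only [Finset.sum_add_distrib] at hsum
  have hkey : binLoss N g u bk1 + binLoss N g v bk < binLoss N g u bk + binLoss N g v bk1 := by
    unfold binLoss
    simp only [hT] at hsum
    linarith
  rcases lt_or_ge (binLoss N g u bk1) (binLoss N g u bk) with h | h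
  · exact Or.inl (mul_lt_mul_of_pos_left h hl)
  · exact Or.inr (mul_lt_mul_of_pos_left (by linarith) hl')
end

section
/- Let f₁ ≥ f₂ ≥ ... ≥ f_{K−1} be non-increasing binary values, let y, h ∈ {1,...,K} with h = 1 + Σ_k f_k, and let y^(k) = 1{y > k}. If h < y, then 1{f_k ≠ y^(k)} = 1 exactly for h ≤ k ≤ y − 1, and if h > y, then 1{f_k ≠ y^(k)} = 1 exactly for y ≤ k ≤ h − 1; if h = y then f_k = y^(k) for all k. In particular, Σ_{k=1}^{K−1} 1{f_k ≠ y^(k)} = |h − y|. -/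
lemma antitone_binary_char (m : ℕ) (f : Fin m → ℕ)
    (hf01 : ∀ k, f k ≤ 1) (hmono : Antitone f) (k : Fin m) :
    f k = if (k : ℕ) < ∑ j, f j then 1 else 0 := by
  by_cases hk : f k = 1
  · have h1 : ∀ j ∈ Finset.Iic k, f j = 1 := by
      intro j hj
      have : f k ≤ f j := hmono (Finset.mem_Iic.mp hj)
      have := hf01 j
      omega
    have h2 : ∑ j ∈ Finset.Iic k, f j = (k : ℕ) + 1 := by
      rw [Finset.sum_congr rfl h1]
      simp [Fin.card_Iic]
    have h3 : ∑ j ∈ Finset.Iic k, f j ≤ ∑ j, f j :=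
      Finset.sum_le_sum_of_subset (Finset.subset_univ _)
    rw [if_pos (by omega)]; exact hk
  · have hk0 : f k = 0 := by have := hf01 k; omega
    have h1 : ∑ j, f j ≤ ∑ j : Fin m, (if j < k then 1 else 0) := by
      apply Finset.sum_le_sum
      intro j _
      by_cases hj : j < k
      · simp [hj, hf01 j]
      · have : f j ≤ f k := hmono (le_of_not_gt hj)
        simp [hj]; omega
    have h2 : ∑ j : Fin m, (if j < k then (1:ℕ) else 0) = (k : ℕ) := by
      rw [Finset.sum_boole]
      have : Finset.filter (fun j => j < k) Finset.univ = Finset.Iio k := by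
        ext j; simp
      rw [this]; simp [Fin.card_Iio]
    rw [if_neg (by omega)]; exact hk0

lemma count_interval (a b m : ℕ) (ha : 1 ≤ a) (hab : a ≤ b) (hb : b ≤ m + 1) :
    ∑ k ∈ Finset.range m, (if a ≤ k + 1 ∧ k + 1 < b then (1:ℕ) else 0) = b - a := by
  rw [Finset.sum_boole]
  have : Finset.filter (fun k => a ≤ k + 1 ∧ k + 1 < b) (Finset.range m)
      = Finset.Ico (a - 1) (b - 1) := by
    ext j; simp [Finset.mem_Ico]; omega
  rw [this]
  simp [Nat.card_Ico]; omega

theorem binary_mistakes_eq_rank_error (m : ℕ) (f : Fin m → ℕ)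
    (hf01 : ∀ k, f k ≤ 1) (hmono : Antitone f)
    (y h : ℕ) (hy1 : 1 ≤ y) (hy2 : y ≤ m + 1) (hh : h = 1 + ∑ k, f k) :
    (h < y → ∀ k : Fin m,
      (f k ≠ (if (k : ℕ) + 1 < y then 1 else 0) ↔
        h ≤ (k : ℕ) + 1 ∧ (k : ℕ) + 1 ≤ y - 1)) ∧
    (y < h → ∀ k : Fin m,
      (f k ≠ (if (k : ℕ) + 1 < y then 1 else 0) ↔
        y ≤ (k : ℕ) + 1 ∧ (k : ℕ) + 1 ≤ h - 1)) ∧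
    (h = y → ∀ k : Fin m, f k = (if (k : ℕ) + 1 < y then 1 else 0)) ∧
    (∑ k : Fin m, (if f k ≠ (if (k : ℕ) + 1 < y then 1 else 0) then 1 else 0))
      = ((h : ℤ) - (y : ℤ)).natAbs := by
  have key : ∀ k : Fin m, f k = if (k : ℕ) + 1 < h then 1 else 0 := by
    intro k
    rw [antitone_binary_char m f hf01 hmono k]
    have : (k : ℕ) < ∑ j, f j ↔ (k : ℕ) + 1 < h := by omega
    split_ifs with h1 h2 h2 <;> tauto
  have hsle : ∑ j, f j ≤ m := by
    calc ∑ j, f j ≤ ∑ _j : Fin m, 1 := Finset.sum_le_sum (fun j _ => hf01 j)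
    _ = m := by simp
  have hh1 : 1 ≤ h := by omega
  have hhm : h ≤ m + 1 := by omega
  refine ⟨?_, ?_, ?_, ?_⟩
  · intro hlt k
    rw [key k]
    split_ifs <;> omega
  · intro hlt k
    rw [key k]
    split_ifs <;> omega
  · intro heq k
    rw [key k, heq]
  · have congr1 : ∀ k : Fin m,
        (if f k ≠ (if (k : ℕ) + 1 < y then 1 else 0) then (1:ℕ) else 0)
        = if min h y ≤ (k : ℕ) + 1 ∧ (k : ℕ) + 1 < max h y then 1 else 0 := by
      intro k
      rw [key k]
      split_ifs <;> omega
    rw [Finset.sum_congr rfl (fun k _ => congr1 k)]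
    rw [Fin.sum_univ_eq_sum_range
      (fun i => if min h y ≤ i + 1 ∧ i + 1 < max h y then (1:ℕ) else 0)]
    rw [count_interval (min h y) (max h y) m (by omega) (by omega) (by omega)]
    omega
end

section
/- Let C be a K×K cost matrix with C_{y,y} = 0 for all y. Let f₁ ≥ ... ≥ f_{K−1} be non-increasing binary predictions with predicted rank h = 1 + Σ_k f_k, and let y^(k) = 1{y > k} be the extended labels of the true rank y. Then C_{y,h} ≤ Σ_{k=1}^{K−1} |C_{y,k} − C_{y,k+1}| · 1{f_k ≠ y^(k)}. -/
lemma tel_abs (g : ℕ → ℝ) : ∀ a b : ℕ, a ≤ b →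
    |g a - g b| ≤ ∑ k ∈ Finset.Ico a b, |g k - g (k + 1)| := by
  intro a b h
  induction b, h using Nat.le_induction with
  | base => simp
  | succ b hb ih =>
    rw [Finset.sum_Ico_succ_top (by omega)]
    calc |g a - g (b + 1)| ≤ |g a - g b| + |g b - g (b + 1)| := abs_sub_le _ _ _
    _ ≤ _ := by linarith

theorem pointwise_cost_bound (m : ℕ) (C : ℕ → ℕ → ℝ) (hC : ∀ y, C y y = 0)
    (f : Fin m → ℕ) (hf01 : ∀ k, f k ≤ 1) (hmono : Antitone f)
    (y : ℕ) (hy1 : 1 ≤ y) (hy2 : y ≤ m + 1) :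
    C y (1 + ∑ k, f k) ≤
      ∑ k : Fin m, |C y ((k : ℕ) + 1) - C y ((k : ℕ) + 2)| *
        (if f k ≠ (if (k : ℕ) + 1 < y then 1 else 0) then (1 : ℝ) else 0) := by
  set s := ∑ k, f k with hs
  have hsm : s ≤ m := by
    calc s ≤ ∑ _k : Fin m, 1 := Finset.sum_le_sum fun k _ => hf01 k
    _ = m := by simp
  set t := y - 1 with ht
  have hyt : y = t + 1 := by omega
  have htm : t ≤ m := by omega
  -- characterize f via s
  have hfk : ∀ k : Fin m, f k = 1 ↔ (k : ℕ) < s := by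
    intro k
    constructor
    · intro h1
      have hone : ∀ j ∈ Finset.Iic k, f j = 1 := fun j hj =>
        le_antisymm (hf01 j) (h1 ▸ hmono (Finset.mem_Iic.mp hj))
      have hle : ∑ j ∈ Finset.Iic k, f j ≤ s :=
        Finset.sum_le_sum_of_subset (Finset.subset_univ _)
      rw [Finset.sum_congr rfl hone] at hle
      simp [Fin.card_Iic] at hle
      omega
    · intro hks
      by_contra h0
      have hf0 : f k = 0 := by have := hf01 k; omega
      have hle : s ≤ ∑ j : Fin m, (if j < k then 1 else 0) := by
        apply Finset.sum_le_sum
        intro j _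
        by_cases hj : j < k
        · simpa [hj] using hf01 j
        · have : f j ≤ f k := hmono (le_of_not_gt hj)
          simp [hj]; omega
      rw [← Finset.card_filter] at hle
      have : Finset.filter (fun j => j < k) Finset.univ = Finset.Iio k := by
        ext j; simp
      rw [this, Fin.card_Iio] at hle
      omega
  set g : ℕ → ℝ := fun k => C y (k + 1) with hg
  set a := min s t with ha
  set b := max s t with hb
  have hbm : b ≤ m := max_le hsm htm
  -- the auxiliary function on ℕ
  set F : ℕ → ℝ := fun k =>
    if h : k < m then
      |C y (k + 1) - C y (k + 2)| *
        (if f ⟨k, h⟩ ≠ (if k + 1 < y then 1 else 0) then (1 : ℝ) else 0)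
    else 0 with hF
  have hFnn : ∀ k, 0 ≤ F k := by
    intro k
    simp only [hF]
    split
    · positivity
    · exact le_rfl
  have hRHS : (∑ k : Fin m, |C y ((k : ℕ) + 1) - C y ((k : ℕ) + 2)| *
        (if f k ≠ (if (k : ℕ) + 1 < y then 1 else 0) then (1 : ℝ) else 0))
      = ∑ k ∈ Finset.range m, F k := by
    rw [← Fin.sum_univ_eq_sum_range F]
    apply Finset.sum_congr rfl
    intro k _
    simp only [hF, k.isLt, dif_pos, Fin.eta]
  have hmid : ∀ k ∈ Finset.Ico a b, F k = |g k - g (k + 1)| := by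
    intro k hk
    rw [Finset.mem_Ico] at hk
    have hkm : k < m := lt_of_lt_of_le hk.2 hbm
    have hmis : f ⟨k, hkm⟩ ≠ (if k + 1 < y then 1 else 0) := by
      rcases le_total s t with hst | hst
      · have hks : s ≤ k := by simp [ha, min_eq_left hst] at hk; omega
        have hkt : k < t := by simp [hb, max_eq_right hst] at hk; omega
        have : f ⟨k, hkm⟩ ≠ 1 := fun h => by
          have := (hfk ⟨k, hkm⟩).mp h; simp at this; omega
        have h0 : f ⟨k, hkm⟩ = 0 := by have := hf01 ⟨k, hkm⟩; omega
        have : k + 1 < y := by omega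
        simp [h0, this]
      · have hkt : t ≤ k := by simp [ha, min_eq_right hst] at hk; omega
        have hks : k < s := by simp [hb, max_eq_left hst] at hk; omega
        have h1 : f ⟨k, hkm⟩ = 1 := (hfk ⟨k, hkm⟩).mpr (by simpa using hks)
        have : ¬ (k + 1 < y) := by omega
        simp [h1, this]
    simp only [hF, dif_pos hkm, if_pos hmis, mul_one, hg]
  have hchain : C y (1 + s) ≤ ∑ k ∈ Finset.Ico a b, F k := by
    have hgs : C y (1 + s) = g s := by show C y (1 + s) = C y (s + 1); rw [Nat.add_comm]
    have hgt : g t = 0 := by show C y (t + 1) = 0; rw [← hyt]; exact hC y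
    have habs : |g a - g b| ≤ ∑ k ∈ Finset.Ico a b, |g k - g (k + 1)| :=
      tel_abs g a b (min_le_max)
    have hab : C y (1 + s) ≤ |g a - g b| := by
      have h1 : C y (1 + s) ≤ |g s - g t| := by
        calc C y (1 + s) = g s - g t := by rw [hgs, hgt]; ring
        _ ≤ |g s - g t| := le_abs_self _
      rcases le_total s t with hst | hst
      · rwa [ha, hb, min_eq_left hst, max_eq_right hst]
      · rw [ha, hb, min_eq_right hst, max_eq_left hst, abs_sub_comm]
        exact h1
    calc C y (1 + s) ≤ |g a - g b| := hab
    _ ≤ ∑ k ∈ Finset.Ico a b, |g k - g (k + 1)| := habs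
    _ = ∑ k ∈ Finset.Ico a b, F k := (Finset.sum_congr rfl hmid).symm
  rw [hRHS]
  refine le_trans hchain (Finset.sum_le_sum_of_subset_of_nonneg ?_ ?_)
  · intro k hk
    rw [Finset.mem_Ico] at hk
    exact Finset.mem_range.mpr (lt_of_lt_of_le hk.2 hbm)
  · intro k _ _
    exact hFnn k
end

section
/- (Reduction of generalization error.) Let C be a K×K cost matrix with C_{y,y} = 0 and C_{y,k} > 0 for k ≠ y. Let P be a probability distribution over pairs (x, y) with y ∈ {1,...,K}, and let f₁,...,f_{K−1} : X → {0,1} be rank-monotonic (f₁(x) ≥ ... ≥ f_{K−1}(x) for all x) with rank prediction h(x) = 1 + Σ_k f_k(x). Then E_{(x,y)∼P}[C_{y,h(x)}] ≤ Σ_{k=1}^{K−1} E_{(x,y)∼P}[ |C_{y,k} − C_{y,k+1}| · 1{f_k(x) ≠ y^(k)} ], where y^(k) = 1{y > k}. -/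
open MeasureTheory

lemma coral_key (m : ℕ) (C : ℕ → ℕ → ℝ) (hC0 : ∀ y, C y y = 0)
    (y : ℕ) (hy1 : 1 ≤ y) (hy2 : y ≤ m + 1)
    (g : ℕ → ℕ) (hg : ∀ j, g j ≤ 1) (hg0 : ∀ j, m ≤ j → g j = 0)
    (hmono : ∀ i j, i ≤ j → g j ≤ g i) :
    C y (1 + ∑ j ∈ Finset.range m, g j) ≤
      ∑ j ∈ Finset.range m, |C y (j + 1) - C y (j + 2)| *
        (if g j ≠ (if j + 1 < y then 1 else 0) then (1:ℝ) else 0) := by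
  set s := ∑ j ∈ Finset.range m, g j with hs
  have hsm : s ≤ m := by
    calc s ≤ ∑ _j ∈ Finset.range m, 1 := Finset.sum_le_sum (fun j _ => hg j)
    _ = m := by simp
  have hA : ∀ j, s ≤ j → g j = 0 := by
    intro j hj
    by_contra hne
    have hgj : g j = 1 := by have := hg j; omega
    have hjm : j < m := by
      by_contra h
      exact hne (hg0 j (by omega))
    have h1 : j + 1 ≤ s := by
      calc j + 1 = ∑ _i ∈ Finset.range (j+1), 1 := by simp
      _ ≤ ∑ i ∈ Finset.range (j+1), g i := by
            apply Finset.sum_le_sum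
            intro i hi
            simp only [Finset.mem_range] at hi
            have := hmono i j (by omega)
            omega
      _ ≤ s := Finset.sum_le_sum_of_subset (Finset.range_subset_range.2 (by omega))
    omega
  have hB : ∀ j, j < s → g j = 1 := by
    intro j hj
    by_contra hne
    have hgj : g j = 0 := by have := hg j; omega
    have h1 : s ≤ j := by
      calc s ≤ ∑ i ∈ Finset.range m, (if i ∈ Finset.range j then 1 else 0) := by
            apply Finset.sum_le_sum
            intro i _
            by_cases hij : i < j
            · simpa [Finset.mem_range, hij] using hg i
            · have h2 : g i ≤ g j := hmono j i (by omega)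
              simp only [Finset.mem_range, hij, if_false]
              omega
      _ = (Finset.range m ∩ Finset.range j).card := by
            rw [Finset.sum_ite_mem]; simp
      _ ≤ (Finset.range j).card := Finset.card_le_card Finset.inter_subset_right
      _ = j := Finset.card_range j
    omega
  set F : ℕ → ℝ := fun j => C y (j + 1) with hF
  set a := min s (y - 1) with ha
  set b := max s (y - 1) with hb
  have hab : a ≤ b := min_le_max
  have hbm : b ≤ m := by omega
  have htel : ∑ j ∈ Finset.Ico a b, (F (j+1) - F j) = F b - F a := by
    rw [Finset.sum_Ico_eq_sum_range]
    have h := Finset.sum_range_sub (fun i => F (a + i)) (b - a)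
    have hba : a + (b - a) = b := by omega
    simp only [← add_assoc] at h
    rw [h, hba]
  have hCyh : C y (1 + s) ≤ |F b - F a| := by
    have hFy : F (y - 1) = 0 := by
      have h3 : y - 1 + 1 = y := by omega
      simp [hF, h3, hC0]
    have h1 : C y (1 + s) = F s - F (y - 1) := by
      rw [hFy, sub_zero, hF]
      simp [Nat.add_comm]
    have h2 : |F b - F a| = |F s - F (y-1)| := by
      rcases le_total s (y-1) with h | h
      · rw [ha, hb, min_eq_left h, max_eq_right h, abs_sub_comm]
      · rw [ha, hb, min_eq_right h, max_eq_left h]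
    rw [h1, h2]
    exact le_abs_self _
  have hmain : |F b - F a| ≤ ∑ j ∈ Finset.Ico a b, |F (j+1) - F j| := by
    rw [← htel]
    exact Finset.abs_sum_le_sum_abs _ _
  have hwrong : ∀ j ∈ Finset.Ico a b,
      |F (j+1) - F j| = |C y (j+1) - C y (j+2)| *
        (if g j ≠ (if j + 1 < y then 1 else 0) then (1:ℝ) else 0) := by
    intro j hj
    simp only [Finset.mem_Ico] at hj
    have hcase : (s ≤ j ∧ j + 1 < y) ∨ (y ≤ j + 1 ∧ j < s) := by
      rcases le_total s (y-1) with h | h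
      · rw [ha, hb, min_eq_left h, max_eq_right h] at hj; omega
      · rw [ha, hb, min_eq_right h, max_eq_left h] at hj; omega
    have hFF : |F (j+1) - F j| = |C y (j+1) - C y (j+2)| := by
      rw [hF, abs_sub_comm]
    rcases hcase with ⟨h1, h2⟩ | ⟨h1, h2⟩
    · have hg0' : g j = 0 := hA j h1
      rw [hFF, hg0', if_pos h2, if_pos (by omega : (0:ℕ) ≠ 1), mul_one]
    · have hg1' : g j = 1 := hB j h2
      rw [hFF, hg1', if_neg (by omega : ¬ j + 1 < y), if_pos (by omega : (1:ℕ) ≠ 0), mul_one]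
  calc C y (1 + s) ≤ |F b - F a| := hCyh
  _ ≤ ∑ j ∈ Finset.Ico a b, |F (j+1) - F j| := hmain
  _ = ∑ j ∈ Finset.Ico a b, |C y (j+1) - C y (j+2)| *
        (if g j ≠ (if j + 1 < y then 1 else 0) then (1:ℝ) else 0) :=
      Finset.sum_congr rfl hwrong
  _ ≤ ∑ j ∈ Finset.range m, |C y (j+1) - C y (j+2)| *
        (if g j ≠ (if j + 1 < y then 1 else 0) then (1:ℝ) else 0) := by
      apply Finset.sum_le_sum_of_subset_of_nonneg
      · intro j hj
        simp only [Finset.mem_Ico] at hj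
        simp only [Finset.mem_range]
        omega
      · intro j _ _
        apply mul_nonneg (abs_nonneg _)
        split_ifs <;> norm_num

theorem reduction_of_generalization_error (m : ℕ) {X : Type*} [MeasurableSpace X]
    (μ : Measure (X × ℕ)) [IsProbabilityMeasure μ]
    (C : ℕ → ℕ → ℝ) (hC0 : ∀ y, C y y = 0)
    (hCpos : ∀ y k, 1 ≤ y → y ≤ m + 1 → 1 ≤ k → k ≤ m + 1 → k ≠ y → 0 < C y k)
    (hsupp : ∀ᵐ p ∂μ, 1 ≤ p.2 ∧ p.2 ≤ m + 1)
    (f : Fin m → X → ℕ) (hf01 : ∀ k x, f k x ≤ 1)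
    (hmono : ∀ x, Antitone (fun k => f k x))
    (hintC : Integrable (fun p : X × ℕ => C p.2 (1 + ∑ k, f k p.1)) μ)
    (hintE : ∀ k : Fin m, Integrable (fun p : X × ℕ =>
      |C p.2 ((k : ℕ) + 1) - C p.2 ((k : ℕ) + 2)| *
        (if f k p.1 ≠ (if (k : ℕ) + 1 < p.2 then 1 else 0) then (1 : ℝ) else 0)) μ) :
    ∫ p : X × ℕ, C p.2 (1 + ∑ k, f k p.1) ∂μ ≤
      ∑ k : Fin m, ∫ p : X × ℕ,
        |C p.2 ((k : ℕ) + 1) - C p.2 ((k : ℕ) + 2)| *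
          (if f k p.1 ≠ (if (k : ℕ) + 1 < p.2 then 1 else 0) then (1 : ℝ) else 0) ∂μ := by
  rw [← integral_finset_sum _ (fun k _ => hintE k)]
  apply integral_mono_ae hintC (integrable_finset_sum _ (fun k _ => hintE k))
  filter_upwards [hsupp] with p hp
  obtain ⟨x, y⟩ := p
  obtain ⟨hy1, hy2⟩ := hp
  set g : ℕ → ℕ := fun j => if h : j < m then f ⟨j, h⟩ x else 0 with hgdef
  have hfg : ∀ k : Fin m, f k x = g k := by
    intro k
    simp [hgdef, k.isLt]
  have h1 : (∑ k : Fin m, f k x) = ∑ j ∈ Finset.range m, g j := by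
    rw [← Fin.sum_univ_eq_sum_range]
    exact Finset.sum_congr rfl (fun k _ => hfg k)
  have h2 : (∑ k : Fin m, |C y ((k : ℕ) + 1) - C y ((k : ℕ) + 2)| *
        (if f k x ≠ (if (k : ℕ) + 1 < y then 1 else 0) then (1 : ℝ) else 0))
      = ∑ j ∈ Finset.range m, |C y (j + 1) - C y (j + 2)| *
        (if g j ≠ (if j + 1 < y then 1 else 0) then (1 : ℝ) else 0) := by
    rw [← Fin.sum_univ_eq_sum_range]
    exact Finset.sum_congr rfl (fun k _ => by rw [hfg])
  show C y (1 + ∑ k : Fin m, f k x) ≤ _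
  rw [h1, h2]
  apply coral_key m C hC0 y hy1 hy2 g
  · intro j
    simp only [hgdef]
    split
    · exact hf01 _ x
    · exact Nat.zero_le 1
  · intro j hj
    simp [hgdef, Nat.not_lt.2 hj]
  · intro i j hij
    simp only [hgdef]
    split
    · split
      · exact hmono x (by exact hij)
      · omega
    · exact Nat.zero_le _
end

section
/- With the absolute cost matrix C_{y,k} = |y − k|, for rank-monotonic binary predictions f₁ ≥ ... ≥ f_{K−1} with h = 1 + Σ_k f_k and extended labels y^(k) = 1{y > k}, the bound of the generalization theorem holds with equality pointwise: |y − h| = Σ_{k=1}^{K−1} 1{f_k ≠ y^(k)}, since |C_{y,k} − C_{y,k+1}| = 1 for all k. -/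
lemma sum_ind_lt (m c : ℕ) (hc : c ≤ m) :
    ∑ k ∈ Finset.range m, (if k < c then (1:ℕ) else 0) = c := by
  rw [Finset.sum_boole]
  have : (Finset.range m).filter (· < c) = Finset.range c := by
    ext x; simp [Finset.mem_filter, Finset.mem_range]; omega
  simp [this]

theorem absolute_cost_equality (m : ℕ) (f : Fin m → ℕ)
    (hf01 : ∀ k, f k ≤ 1) (hmono : Antitone f)
    (y h : ℕ) (hy1 : 1 ≤ y) (hy2 : y ≤ m + 1) (hh : h = 1 + ∑ k, f k) :
    (((y : ℤ) - (h : ℤ)).natAbs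
      = ∑ k : Fin m, (if f k ≠ (if (k : ℕ) + 1 < y then 1 else 0) then 1 else 0)) ∧
    (∀ k : ℕ, |(|(y : ℤ) - (k : ℤ)|) - (|(y : ℤ) - ((k : ℤ) + 1)|)| = 1) := by
  set t := ∑ k, f k with ht
  have htm : t ≤ m := by
    calc t ≤ ∑ _k : Fin m, 1 := Finset.sum_le_sum (fun k _ => hf01 k)
    _ = m := by simp
  have hfk : ∀ k : Fin m, f k = if (k : ℕ) < t then 1 else 0 := by
    intro k
    by_cases hk : (k : ℕ) < t
    · simp only [hk, if_true]
      by_contra hne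
      have hk0 : f k = 0 := by have := hf01 k; omega
      have hle : t ≤ (k : ℕ) := by
        have h1 : t ≤ ∑ j : Fin m, (if (j : ℕ) < (k : ℕ) then 1 else 0) := by
          apply Finset.sum_le_sum
          intro j _
          by_cases hj : (j : ℕ) < (k : ℕ)
          · simp [hj, hf01 j]
          · have : k ≤ j := by
              rw [Fin.le_def]; omega
            have := hmono this
            simp [hj]; omega
        have h2 : ∑ j : Fin m, (if (j : ℕ) < (k : ℕ) then (1:ℕ) else 0) = k := by
          rw [Fin.sum_univ_eq_sum_range (fun j => if j < (k:ℕ) then (1:ℕ) else 0)]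
          exact sum_ind_lt m k (le_of_lt k.isLt)
        omega
      omega
    · simp only [hk, if_false]
      by_contra hne
      have hk1 : f k = 1 := by have := hf01 k; omega
      have hge : (k : ℕ) + 1 ≤ t := by
        have h1 : ∑ j : Fin m, (if (j : ℕ) < (k : ℕ) + 1 then 1 else 0) ≤ t := by
          apply Finset.sum_le_sum
          intro j _
          by_cases hj : (j : ℕ) < (k : ℕ) + 1
          · have : j ≤ k := by rw [Fin.le_def]; omega
            have := hmono this
            simp [hj]; omega
          · simp [hj]
        have h2 : ∑ j : Fin m, (if (j : ℕ) < (k : ℕ) + 1 then (1:ℕ) else 0) = k + 1 := by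
          rw [Fin.sum_univ_eq_sum_range (fun j => if j < (k:ℕ)+1 then (1:ℕ) else 0)]
          exact sum_ind_lt m ((k:ℕ)+1) k.isLt
        omega
      omega
  constructor
  · have hsum : ∑ k : Fin m, (if f k ≠ (if (k : ℕ) + 1 < y then 1 else 0) then (1:ℕ) else 0)
        = ∑ k ∈ Finset.range m, (if (if k < t then (1:ℕ) else 0) ≠ (if k + 1 < y then 1 else 0) then (1:ℕ) else 0) := by
      rw [← Fin.sum_univ_eq_sum_range]
      apply Finset.sum_congr rfl
      intro k _
      rw [hfk k]
    rw [hsum]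
    have key : ∑ k ∈ Finset.range m, (if (if k < t then (1:ℕ) else 0) ≠ (if k + 1 < y then 1 else 0) then (1:ℕ) else 0)
        = ∑ k ∈ Finset.range m, (if (min t (y-1) ≤ k ∧ k < max t (y-1)) then (1:ℕ) else 0) := by
      apply Finset.sum_congr rfl
      intro k _
      have : ((if k < t then (1:ℕ) else 0) ≠ (if k + 1 < y then 1 else 0)) ↔ (min t (y-1) ≤ k ∧ k < max t (y-1)) := by
        by_cases h1 : k < t <;> by_cases h2 : k + 1 < y <;> simp [h1, h2] <;> omega
      simp only [this]
    rw [key]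
    have hfil : ∑ k ∈ Finset.range m, (if (min t (y-1) ≤ k ∧ k < max t (y-1)) then (1:ℕ) else 0)
        = max t (y-1) - min t (y-1) := by
      rw [Finset.sum_boole]
      rw [show (Finset.range m).filter (fun x => t ⊓ (y - 1) ≤ x ∧ x < t ⊔ (y - 1))
          = Finset.Ico (t ⊓ (y-1)) (t ⊔ (y-1)) from by
        ext x; simp [Finset.mem_filter, Finset.mem_range, Finset.mem_Ico]; omega]
      simp [Nat.card_Ico]
    rw [hfil]
    omega
  · intro k
    rcases le_or_gt y k with hle | hlt
    · have : (k:ℤ) ≥ (y:ℤ) := by exact_mod_cast hle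
      rw [abs_sub_comm ((y:ℤ)) ((k:ℤ))]
      rw [abs_of_nonneg (by omega : (0:ℤ) ≤ (k:ℤ) - y)]
      rw [abs_sub_comm ((y:ℤ)) ((k:ℤ)+1)]
      rw [abs_of_nonneg (by omega : (0:ℤ) ≤ (k:ℤ) + 1 - y)]
      norm_num
    · have : (y:ℤ) ≥ (k:ℤ) + 1 := by exact_mod_cast hlt
      rw [abs_of_nonneg (by omega : (0:ℤ) ≤ (y:ℤ) - k)]
      rw [abs_of_nonneg (by omega : (0:ℤ) ≤ (y:ℤ) - ((k:ℤ)+1))]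
      rw [abs_of_pos (by omega : (0:ℤ) < (y:ℤ) - k - ((y:ℤ) - ((k:ℤ)+1)))]
      omega
end

section
/- Fix logits g₁,...,g_N ∈ ℝ and two binary label vectors u, v ∈ {0,1}^N with u_n ≥ v_n for all n. Let ℓ(b; labels) = −Σ_n [ labels_n log σ(g_n + b) + (1 − labels_n) log(1 − σ(g_n + b)) ]. If b* minimizes ℓ(·; u) and b** minimizes ℓ(·; v), and there is some n with u_n = 1, v_n = 0, then b* ≥ b**. -/
/-! The difference `log σ(z) - log (1 - σ(z))` is exactly `z`, so passing from labels `v` to labels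
`u` tilts the loss by the linear function `b ↦ -∑ₙ (uₙ - vₙ)(gₙ + b)`, whose slope is negative as soon
as `u` dominates `v` strictly somewhere. Tilting a function by a decreasing linear term can only move
its minimizers to the right. -/

lemma log_sigmoid_sub_log_one_sub_sigmoid (z : ℝ) :
    Real.log (sigmoid z) - Real.log (1 - sigmoid z) = z := by
  have hpos : 0 < 1 + Real.exp (-z) := by positivity
  have hcompl : 1 - sigmoid z = Real.exp (-z) / (1 + Real.exp (-z)) := by
    unfold sigmoid
    field_simp
    ring
  rw [hcompl, sigmoid, Real.log_div one_ne_zero hpos.ne',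
    Real.log_div (Real.exp_ne_zero _) hpos.ne', Real.log_one, Real.log_exp]
  ring

lemma binLoss_eq_sub (N : ℕ) (g u v : Fin N → ℝ) (b : ℝ) :
    binLoss N g u b =
      binLoss N g v b - ((∑ n, (u n - v n) * g n) + (∑ n, (u n - v n)) * b) := by
  have hterm (n : Fin N) :
      u n * Real.log (sigmoid (g n + b)) + (1 - u n) * Real.log (1 - sigmoid (g n + b)) =
        (v n * Real.log (sigmoid (g n + b)) + (1 - v n) * Real.log (1 - sigmoid (g n + b))) +
          ((u n - v n) * g n + (u n - v n) * b) := by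
    linear_combination (u n - v n) * log_sigmoid_sub_log_one_sub_sigmoid (g n + b)
  simp only [binLoss, hterm, Finset.sum_add_distrib, Finset.sum_mul]
  ring

lemma le_of_minimizers_of_eq_sub_linear {f h : ℝ → ℝ} {a s x y : ℝ} (hs : 0 < s)
    (hf : ∀ b, f b = h b - (a + s * b)) (hx : ∀ b, f x ≤ f b) (hy : ∀ b, h y ≤ h b) :
    y ≤ x := by
  have hfx := hx y
  have hhy := hy x
  rw [hf, hf] at hfx
  exact le_of_mul_le_mul_left (by linarith) hs

theorem ordered_optimal_biases_general (N : ℕ) (g : Fin N → ℝ) (u v : Fin N → ℝ)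
    (huv : ∀ n, v n ≤ u n) (hsep : ∃ n, u n = 1 ∧ v n = 0)
    (bstar bstarstar : ℝ)
    (hmin_u : ∀ b : ℝ, binLoss N g u bstar ≤ binLoss N g u b)
    (hmin_v : ∀ b : ℝ, binLoss N g v bstarstar ≤ binLoss N g v b) :
    bstarstar ≤ bstar := by
  have hslope : 0 < ∑ n, (u n - v n) := by
    obtain ⟨n, hun, hvn⟩ := hsep
    refine Finset.sum_pos' (fun i _ => sub_nonneg.mpr (huv i)) ⟨n, Finset.mem_univ n, ?_⟩
    simp [hun, hvn]
  exact le_of_minimizers_of_eq_sub_linear hslope (binLoss_eq_sub N g u v) hmin_u hmin_v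

theorem ordered_optimal_biases (N : ℕ) (g : Fin N → ℝ) (u v : Fin N → ℝ)
    (hu : ∀ n, u n = 0 ∨ u n = 1) (hv : ∀ n, v n = 0 ∨ v n = 1)
    (huv : ∀ n, v n ≤ u n) (hsep : ∃ n, u n = 1 ∧ v n = 0)
    (bstar bstarstar : ℝ)
    (hmin_u : ∀ b : ℝ, binLoss N g u bstar ≤ binLoss N g u b)
    (hmin_v : ∀ b : ℝ, binLoss N g v bstarstar ≤ binLoss N g v b) :
    bstarstar ≤ bstar :=
  ordered_optimal_biases_general N g u v huv hsep bstar bstarstar hmin_u hmin_v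
end
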